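/- Fix a metric space $(V, \mathbf{d})$ with basepoint $\mathbf{0}$ and constant $L \ge 1$. If $A$ is a finite packed set, $D \subsetneq A$ is prior in $A$, and $\mathbf{0} \notin A \setminus D$, then $A \setminus D$ is packed. -/
import Mathlib


noncomputable def setDist {V : Type*} [MetricSpace V] (D E : Set V) : ℝ :=
  sInf (Set.image2 dist D E)

/-- `D` witnesses that `A` is sparse: it is a nonempty proper subset of `A`
avoiding the basepoint `o`, whose distance to its complement in `A` exceeds
`L * max (diam D) 1`. -/
def SparseWitness {V : Type*} [MetricSpace V] (o : V) (L : ℝ) (A D : Set V) : Prop :=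
  D.Nonempty ∧ D ⊆ A ∧ D ≠ A ∧ o ∉ D ∧
    setDist D (A \ D) > L * max (Metric.diam D) 1

/-- `A` is packed if it admits no sparse witness. -/
def IsPacked {V : Type*} [MetricSpace V] (o : V) (L : ℝ) (A : Set V) : Prop :=
  ∀ D : Set V, ¬ SparseWitness o L A D

/-- `D` is a maximal packed proper subset of `A`. -/
def MaximalPacked {V : Type*} [MetricSpace V] (o : V) (L : ℝ) (A D : Set V) : Prop :=
  D ⊂ A ∧ IsPacked o L D ∧ ∀ D' : Set V, D ⊂ D' → D' ⊂ A → ¬ IsPacked o L D'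

/-- `D` is prior in `A`: a maximal packed proper subset which either contains
the basepoint or has maximal diameter among packed proper subsets of `A`. -/
def Prior {V : Type*} [MetricSpace V] (o : V) (L : ℝ) (A D : Set V) : Prop :=
  MaximalPacked o L A D ∧
    (o ∈ D ∨ ∀ D' : Set V, D' ⊂ A → IsPacked o L D' → Metric.diam D' ≤ Metric.diam D)

private lemma setDist_le_dist {V : Type*} [MetricSpace V] {D E : Set V} {x y : V}
    (hx : x ∈ D) (hy : y ∈ E) : setDist D E ≤ dist x y := by
  apply csInf_le
  · refine ⟨0, ?_⟩
    rintro z ⟨a, _, b, _, rfl⟩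
    exact dist_nonneg
  · exact Set.mem_image2_of_mem hx hy

private lemma forall_lt_of_lt_setDist {V : Type*} [MetricSpace V] {D E : Set V} {c : ℝ}
    (h : c < setDist D E) {x y : V} (hx : x ∈ D) (hy : y ∈ E) : c < dist x y :=
  lt_of_lt_of_le h (setDist_le_dist hx hy)

private lemma lt_setDist_of_forall {V : Type*} [MetricSpace V] {D E : Set V} {c : ℝ}
    (hDf : D.Finite) (hEf : E.Finite) (hDne : D.Nonempty) (hEne : E.Nonempty)
    (h : ∀ x ∈ D, ∀ y ∈ E, c < dist x y) : c < setDist D E := by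
  have hne : (Set.image2 dist D E).Nonempty := hDne.image2 hEne
  have hfin : (Set.image2 dist D E).Finite := Set.Finite.image2 _ hDf hEf
  have hmem := hne.csInf_mem hfin
  rw [Set.mem_image2] at hmem
  obtain ⟨x, hx, y, hy, heq⟩ := hmem
  rw [setDist, ← heq]
  exact h x hx y hy

private lemma bound_mono {V : Type*} [MetricSpace V] {s t : Set V} {L : ℝ} (hL : 1 ≤ L)
    (hst : s ⊆ t) (ht : Bornology.IsBounded t) :
    L * max (Metric.diam s) 1 ≤ L * max (Metric.diam t) 1 :=
  mul_le_mul_of_nonneg_left (max_le_max (Metric.diam_mono hst ht) le_rfl) (by linarith)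

theorem stmt8 {V : Type*} [MetricSpace V] (o : V) (L : ℝ) (hL : 1 ≤ L)
    (A : Set V) (hA : A.Finite) (hpA : IsPacked o L A)
    (D : Set V) (hD : D ⊂ A) (hprior : Prior o L A D) (ho : o ∉ A \ D) :
    IsPacked o L (A \ D) := by
  classical
  intro E0 hE0
  by_cases hDem : D = ∅
  · subst hDem
    rw [Set.diff_empty] at hE0
    exact hpA E0 hE0
  have hDne : D.Nonempty := Set.nonempty_iff_ne_empty.mpr hDem
  obtain ⟨⟨hDA, hpD, hmax⟩, hcase⟩ := hprior
  have hDsub : D ⊆ A := hDA.subset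
  have hDf : D.Finite := hA.subset hDsub
  have hADf : (A \ D).Finite := hA.subset Set.diff_subset
  have hAb : Bornology.IsBounded A := hA.isBounded
  -- pick a sparse witness of minimal cardinality
  have hex : ∃ n : ℕ, ∃ E1, SparseWitness o L (A \ D) E1 ∧ E1.ncard = n := ⟨_, E0, hE0, rfl⟩
  obtain ⟨E1, hE1, hcard⟩ := Nat.find_spec hex
  have hminE : ∀ E2, SparseWitness o L (A \ D) E2 → E1.ncard ≤ E2.ncard := by
    intro E2 h2
    rw [hcard]
    exact Nat.find_min' hex ⟨E2, h2, rfl⟩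
  obtain ⟨hE1ne, hE1sub, hE1neq, hoE1, hE1dist⟩ := hE1
  have hE1A : E1 ⊆ A := hE1sub.trans Set.diff_subset
  have hE1f : E1.Finite := hA.subset hE1A
  have hE1b : Bornology.IsBounded E1 := hE1f.isBounded
  set G := (A \ D) \ E1 with hGdef
  have hGne : G.Nonempty := by
    rw [Set.nonempty_iff_ne_empty]
    intro h
    exact hE1neq (subset_antisymm hE1sub (Set.diff_eq_empty.mp h))
  have hGf : G.Finite := hADf.subset Set.diff_subset
  have hE1G : ∀ x ∈ E1, ∀ y ∈ G, L * max (Metric.diam E1) 1 < dist x y :=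
    fun x hx y hy => forall_lt_of_lt_setDist hE1dist hx hy
  -- membership in G from absence elsewhere
  have hGmem : ∀ y ∈ A, y ∉ D → y ∉ E1 → y ∈ G := fun y hy h1 h2 => ⟨⟨hy, h1⟩, h2⟩
  -- E1 is packed
  have hpE1 : IsPacked o L E1 := by
    intro E' hE'
    obtain ⟨hne', hsub', hneq', ho', hdist'⟩ := hE'
    have hE'pt : ∀ x ∈ E', ∀ y ∈ E1 \ E', L * max (Metric.diam E') 1 < dist x y :=
      fun x hx y hy => forall_lt_of_lt_setDist hdist' hx hy
    have hble : L * max (Metric.diam E') 1 ≤ L * max (Metric.diam E1) 1 :=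
      bound_mono hL hsub' hE1b
    have hE'AD : SparseWitness o L (A \ D) E' := by
      refine ⟨hne', hsub'.trans hE1sub, ?_, ho', ?_⟩
      · intro h
        rw [h] at hsub'
        exact hE1neq (subset_antisymm hE1sub hsub')
      · apply lt_setDist_of_forall (hE1f.subset hsub') (hADf.subset Set.diff_subset) hne'
        · obtain ⟨g, hg⟩ := hGne
          exact ⟨g, hg.1, fun hgE' => hg.2 (hsub' hgE')⟩
        · intro x hx y hy
          by_cases hyE1 : y ∈ E1
          · exact hE'pt x hx y ⟨hyE1, hy.2⟩
          · exact lt_of_le_of_lt hble (hE1G x (hsub' hx) y ⟨hy.1, hyE1⟩)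
    have hlt : E'.ncard < E1.ncard :=
      Set.ncard_lt_ncard ⟨hsub', fun h => hneq' (subset_antisymm hsub' h)⟩ hE1f
    exact absurd (hminE E' hE'AD) (by omega)
  -- D ∪ E1 is packed
  have hpDE : IsPacked o L (D ∪ E1) := by
    intro F hF
    obtain ⟨hFne, hFsub, hFneq, hoF, hFdist⟩ := hF
    have hFA : F ⊆ A := hFsub.trans (Set.union_subset hDsub hE1A)
    have hFf : F.Finite := hA.subset hFA
    have hFb : Bornology.IsBounded F := hFf.isBounded
    have hFpt : ∀ x ∈ F, ∀ y ∈ (D ∪ E1) \ F, L * max (Metric.diam F) 1 < dist x y :=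
      fun x hx y hy => forall_lt_of_lt_setDist hFdist hx hy
    by_cases hDF : D ⊆ F
    · -- D ⊆ F : since o ∉ F, o ∉ D, so D has maximal diameter
      have hoD : o ∉ D := fun h => hoF (hDF h)
      have hdiamD : ∀ D' : Set V, D' ⊂ A → IsPacked o L D' → Metric.diam D' ≤ Metric.diam D := by
        rcases hcase with h | h
        · exact absurd h hoD
        · exact h
      have hE1D : Metric.diam E1 ≤ Metric.diam D := by
        apply hdiamD E1 ?_ hpE1
        refine ⟨hE1A, fun h => ?_⟩
        obtain ⟨d, hd⟩ := hDne
        exact (hE1sub (h (hDsub hd))).2 hd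
      have hDFdiam : Metric.diam D ≤ Metric.diam F := Metric.diam_mono hDF hFb
      set F' := E1 \ F with hF'def
      have hF'sub : F' ⊆ E1 := Set.diff_subset
      have hF'ne : F'.Nonempty := by
        rcases Set.not_subset.mp (fun h => hFneq (subset_antisymm hFsub h)) with ⟨x, hx, hxF⟩
        rcases hx with hx | hx
        · exact absurd (hDF hx) hxF
        · exact ⟨x, hx, hxF⟩
      have hbF' : L * max (Metric.diam F') 1 ≤ L * max (Metric.diam E1) 1 :=
        bound_mono hL hF'sub hE1b
      have hbE1F : L * max (Metric.diam E1) 1 ≤ L * max (Metric.diam F) 1 :=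
        mul_le_mul_of_nonneg_left (max_le_max (hE1D.trans hDFdiam) le_rfl) (by linarith)
      apply hpA F'
      refine ⟨hF'ne, hF'sub.trans hE1A, ?_, fun h => hoE1 h.1, ?_⟩
      · intro h
        obtain ⟨d, hd⟩ := hDne
        have hd' : d ∈ F' := h ▸ hDsub hd
        exact (hE1sub hd'.1).2 hd
      · apply lt_setDist_of_forall (hE1f.subset hF'sub) (hA.subset Set.diff_subset) hF'ne
        · obtain ⟨d, hd⟩ := hDne
          exact ⟨d, hDsub hd, fun hdF' => (hE1sub hdF'.1).2 hd⟩
        · intro x hx y hy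
          by_cases hyF : y ∈ F
          · have := hFpt y hyF x ⟨Set.mem_union_right _ hx.1, hx.2⟩
            rw [dist_comm] at this
            exact lt_of_le_of_lt (hbF'.trans hbE1F) this
          · have hyG : y ∈ G := by
              refine hGmem y hy.1 (fun hyD => hyF (hDF hyD)) (fun hyE1 => hy.2 ⟨hyE1, hyF⟩)
            exact lt_of_le_of_lt hbF' (hE1G x hx.1 y hyG)
    · by_cases hFD : (F ∩ D).Nonempty
      · -- F ∩ D is a sparse witness of D
        apply hpD (F ∩ D)
        have hFDneD : F ∩ D ≠ D := by
          intro h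
          apply hDF
          intro x hx
          rw [← h] at hx
          exact hx.1
        refine ⟨hFD, Set.inter_subset_right, hFDneD, fun h => hoF h.1, ?_⟩
        apply lt_setDist_of_forall (hFf.subset Set.inter_subset_left)
          (hDf.subset Set.diff_subset) hFD
        · rcases Set.not_subset.mp (fun h : D ⊆ F ∩ D => hFDneD
            (subset_antisymm Set.inter_subset_right h)) with ⟨d, hd, hd'⟩
          exact ⟨d, hd, hd'⟩
        · intro x hx y hy
          have hybig : y ∈ (D ∪ E1) \ F := by
            refine ⟨Set.mem_union_left _ hy.1, fun hyF => hy.2 ⟨hyF, hy.1⟩⟩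
          have hble : L * max (Metric.diam (F ∩ D)) 1 ≤ L * max (Metric.diam F) 1 :=
            bound_mono hL Set.inter_subset_left hFb
          exact lt_of_le_of_lt hble (hFpt x hx.1 y hybig)
      · -- F ⊆ E1 : F is a sparse witness of A
        have hFE1 : F ⊆ E1 := by
          intro x hx
          rcases hFsub hx with h | h
          · exact absurd ⟨x, hx, h⟩ hFD
          · exact h
        have hble : L * max (Metric.diam F) 1 ≤ L * max (Metric.diam E1) 1 :=
          bound_mono hL hFE1 hE1b
        apply hpA F
        refine ⟨hFne, hFA, ?_, hoF, ?_⟩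
        · intro h
          obtain ⟨d, hd⟩ := hDne
          have : d ∈ F := h ▸ hDsub hd
          exact (hE1sub (hFE1 this)).2 hd
        · apply lt_setDist_of_forall hFf (hA.subset Set.diff_subset) hFne
          · obtain ⟨d, hd⟩ := hDne
            exact ⟨d, hDsub hd, fun hdF => (hE1sub (hFE1 hdF)).2 hd⟩
          · intro x hx y hy
            by_cases hyDE : y ∈ D ∪ E1
            · exact hFpt x hx y ⟨hyDE, hy.2⟩
            · have hyG : y ∈ G := hGmem y hy.1 (fun h => hyDE (Set.mem_union_left _ h))
                (fun h => hyDE (Set.mem_union_right _ h))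
              exact lt_of_le_of_lt hble (hE1G x (hFE1 hx) y hyG)
  -- contradiction with maximality of D
  apply hmax (D ∪ E1) ?_ ?_ hpDE
  · refine ⟨Set.subset_union_left, fun h => ?_⟩
    obtain ⟨e, he⟩ := hE1ne
    exact (hE1sub he).2 (h (Set.mem_union_right _ he))
  · refine ⟨Set.union_subset hDsub hE1A, fun h => ?_⟩
    obtain ⟨g, hg⟩ := hGne
    rcases h hg.1.1 with h' | h'
    · exact hg.1.2 h'
    · exact hg.2 h'
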